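/- Let M be an even squarefree integer with M/2 ≡ 5 (mod 8), and let K = ℚ(√M) with 𝔮₂ the unique prime ideal of 𝒪_K above 2. Then 𝔮₂ is not a principal ideal. -/

import Mathlib

open NumberField

/-- The real quadratic field `K = ℚ(√M)`, realized inside `ℝ`. -/
noncomputable def Ksqrt (M : ℕ) : IntermediateField ℚ ℝ :=
  IntermediateField.adjoin ℚ {Real.sqrt M}

/-- `ε` is the fundamental unit of `ℚ(√M)`: `ε > 1` and `ε` is minimal among units `> 1`. -/
def IsFundamentalUnit (M : ℕ) (ε : (𝓞 (Ksqrt M))ˣ) : Prop :=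
  1 < (((ε : 𝓞 (Ksqrt M)) : Ksqrt M) : ℝ) ∧
    ∀ u : (𝓞 (Ksqrt M))ˣ, 1 < (((u : 𝓞 (Ksqrt M)) : Ksqrt M) : ℝ) →
      (((ε : 𝓞 (Ksqrt M)) : Ksqrt M) : ℝ) ≤ (((u : 𝓞 (Ksqrt M)) : Ksqrt M) : ℝ)

/-- Given the family `Q` of ramified primes (`Q q` is the prime ideal above `q`),
this is the squarefree product ideal `𝔪_d = ∏_{q prime, q ∣ d} 𝔮_q`. -/
noncomputable def mIdeal (M : ℕ) (Q : ℕ → Ideal (𝓞 (Ksqrt M))) (d : ℕ) :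
    Ideal (𝓞 (Ksqrt M)) :=
  ∏ q ∈ d.primeFactors, Q q

/-! If `M ≡ 2 (mod 4)` is squarefree then `𝒪_K = ℤ[√M]`: an integral `x + y√M` has integral
trace `2x` and norm `x² - My²`, which forces `2y ∈ ℤ` and then, modulo 4, `x, y ∈ ℤ`.
In `ℤ[√M]` a prime containing `2` also contains `√M`, so a generator `α` would have norm dividing
`gcd(4, M) = 2`. Norm `±1` makes `α` a unit, and `x² - My² = ±2` has no solution modulo 16
when `M ≡ 10 (mod 16)`. -/

theorem Int.cast_zmod_four_eq_two_or_eq_three {d : ℤ} (hd : d % 4 = 2 ∨ d % 4 = 3) :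
    (d : ZMod 4) = 2 ∨ (d : ZMod 4) = 3 := by
  rw [← ZMod.intCast_mod, Nat.cast_ofNat]
  rcases hd with h | h <;> rw [h] <;> decide

theorem Int.ne_mul_self_of_emod_four {d : ℤ} (hd : d % 4 = 2 ∨ d % 4 = 3) (n : ℤ) :
    d ≠ n * n := by
  have squares_mod_four : ∀ x : ZMod 4, x * x ≠ 2 ∧ x * x ≠ 3 := by decide
  rintro rfl
  have := Int.cast_zmod_four_eq_two_or_eq_three hd
  push_cast at this
  exact this.elim (squares_mod_four _).1 (squares_mod_four _).2

theorem Rat.exists_intCast_eq_of_squarefree_mul_sq {d : ℤ} (hd : Squarefree d) {u : ℚ} {k : ℤ}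
    (h : d * u ^ 2 = k) : ∃ t : ℤ, u = t := by
  have hnum : (u.num : ℚ) = u * u.den := (Rat.mul_den_eq_num u).symm
  have hdvd : (u.den : ℤ) ^ 2 ∣ d * u.num ^ 2 := ⟨k, by
    have : (d : ℚ) * u.num ^ 2 = (u.den : ℚ) ^ 2 * k := by
      rw [hnum, ← h]; ring
    exact_mod_cast this⟩
  have hcop : IsCoprime ((u.den : ℤ) ^ 2) (u.num ^ 2) :=
    (Int.isCoprime_iff_gcd_eq_one (m := u.den) (n := u.num)).mpr u.reduced.symm |>.pow
  have hunit : IsUnit (u.den : ℤ) := hd _ (by rw [← sq]; exact hcop.dvd_of_dvd_mul_right hdvd)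
  have hden : u.den = 1 := by simpa using Int.isUnit_iff_natAbs_eq.mp hunit
  exact ⟨u.num, by rw [hnum, hden]; simp⟩

theorem Rat.exists_intCast_eq_of_two_mul_of_sq_sub_mul_sq {d : ℤ} (hsf : Squarefree d)
    (hd : d % 4 = 2 ∨ d % 4 = 3) {x y : ℚ} {s n : ℤ} (hs : 2 * x = s)
    (hn : x ^ 2 - d * y ^ 2 = n) : (∃ p : ℤ, x = p) ∧ ∃ q : ℤ, y = q := by
  obtain ⟨t, ht⟩ := exists_intCast_eq_of_squarefree_mul_sq hsf (u := 2 * y) (k := s ^ 2 - 4 * n)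
    (by push_cast; rw [← hs, ← hn]; ring)
  have hst : (s : ZMod 4) ^ 2 - d * (t : ZMod 4) ^ 2 = 0 := by
    have : (s : ℚ) ^ 2 - d * t ^ 2 = 4 * n := by rw [← hs, ← ht, ← hn]; ring
    have := congrArg (Int.cast : ℤ → ZMod 4) (by exact_mod_cast this : s ^ 2 - d * t ^ 2 = 4 * n)
    push_cast at this
    rw [this]
    exact zero_mul _
  let π := ZMod.castHom (by norm_num : 2 ∣ 4) (ZMod 2)
  have even_of_mod_four : ∀ a b c : ZMod 4, (c = 2 ∨ c = 3) → a ^ 2 - c * b ^ 2 = 0 → π a = 0 ∧ π b = 0 := by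
    decide
  obtain ⟨hs2, ht2⟩ := even_of_mod_four _ _ _ (Int.cast_zmod_four_eq_two_or_eq_three hd) hst
  rw [map_intCast, ZMod.intCast_zmod_eq_zero_iff_dvd] at hs2 ht2
  obtain ⟨p, rfl⟩ := hs2
  obtain ⟨q, rfl⟩ := ht2
  exact ⟨⟨p, by push_cast at hs; linarith⟩, ⟨q, by push_cast at ht; linarith⟩⟩

namespace Zsqrtd

variable {d : ℤ}

theorem norm_dvd_two_of_dvd_two_of_dvd_sqrtd (hd : d % 4 = 2) {α : ℤ√d} (h2 : α ∣ 2)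
    (hs : α ∣ sqrtd) : α.norm ∣ 2 := by
  have h4 : α.norm ∣ (2 : ℤ√d).norm := map_dvd (normMonoidHom (d := d)) h2
  have hd : α.norm ∣ (sqrtd : ℤ√d).norm := map_dvd (normMonoidHom (d := d)) hs
  simp only [norm_def, re_ofNat, im_ofNat, re_sqrtd, im_sqrtd] at h4 hd
  norm_num at h4 hd
  have h2d : (2 : ℤ) = d - 4 * (d / 4) := by omega
  rw [h2d]
  exact dvd_sub hd (h4.mul_right _)

theorem natAbs_norm_ne_two (hd : d % 16 = 10) (α : ℤ√d) : α.norm.natAbs ≠ 2 := by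
  have hd16 : (d : ZMod 16) = 10 := by
    rw [← ZMod.intCast_mod, Nat.cast_ofNat, hd]; rfl
  have no_sol_mod_16 : ∀ x y : ZMod 16, x * x - 10 * y * y ≠ 2 ∧ x * x - 10 * y * y ≠ -2 := by decide
  intro h
  rcases Int.natAbs_eq α.norm with hn | hn <;> rw [h] at hn <;>
    have := congrArg (Int.cast : ℤ → ZMod 16) hn <;>
    push_cast [norm_def, hd16] at this
  · exact (no_sol_mod_16 _ _).1 this
  · exact (no_sol_mod_16 _ _).2 this

theorem isUnit_of_dvd_two_of_dvd_sqrtd (hd : d % 16 = 10) {α : ℤ√d} (h2 : α ∣ 2)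
    (hs : α ∣ sqrtd) : IsUnit α := by
  have hdvd := Int.natAbs_dvd_natAbs.mpr (norm_dvd_two_of_dvd_two_of_dvd_sqrtd (by omega) h2 hs)
  rcases (Nat.dvd_prime Nat.prime_two).mp hdvd with h | h
  · exact norm_eq_one_iff.mp h
  · exact absurd h (natAbs_norm_ne_two hd α)

theorem sqrtd_mem_of_two_mem (hd : d % 2 = 0) {P : Ideal (ℤ√d)} [P.IsPrime] (h2 : 2 ∈ P) :
    sqrtd ∈ P := by
  have : sqrtd * sqrtd ∈ P := by
    obtain ⟨k, hk⟩ : (2 : ℤ) ∣ d := Int.dvd_of_emod_eq_zero hd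
    have hdk : (d : ℤ√d) = 2 * k := by ext <;> simp [hk]
    rw [dmuld, hdk]
    exact P.mul_mem_right _ h2
  exact (Ideal.IsPrime.mem_or_mem ‹_› this).elim id id

theorem not_isPrincipal_of_two_mem (hd : d % 16 = 10) {P : Ideal (ℤ√d)} [hP : P.IsPrime]
    (h2 : 2 ∈ P) : ¬ P.IsPrincipal := by
  rintro ⟨α, hα⟩
  rw [Ideal.submodule_span_eq] at hα
  have hs := sqrtd_mem_of_two_mem (by omega) h2
  rw [hα, Ideal.mem_span_singleton] at h2 hs
  exact hP.ne_top (hα ▸ Ideal.span_singleton_eq_top.mpr (isUnit_of_dvd_two_of_dvd_sqrtd hd h2 hs))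

end Zsqrtd

namespace QuadraticAlgebra

variable {R : Type*} [CommRing R] {a b : R} {z : QuadraticAlgebra R a b}

theorem isIntegral_star (hz : IsIntegral ℤ z) : IsIntegral ℤ (star z) :=
  hz.map (starRingEnd _).toIntAlgHom

theorem isIntegral_trace (hz : IsIntegral ℤ z) : IsIntegral ℤ (trace z) := by
  rw [← isIntegral_algebraMap_iff (B := QuadraticAlgebra R a b) C_injective,
    algebraMap_trace_eq_add_star]
  exact hz.add (isIntegral_star hz)

theorem isIntegral_norm (hz : IsIntegral ℤ z) : IsIntegral ℤ (norm z) := by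
  rw [← isIntegral_algebraMap_iff (B := QuadraticAlgebra R a b) C_injective,
    algebraMap_norm_eq_mul_star]
  exact hz.mul (isIntegral_star hz)

theorem exists_eq_mk_intCast_of_isIntegral {d : ℤ} (hsf : Squarefree d)
    (hd : d % 4 = 2 ∨ d % 4 = 3) {z : QuadraticAlgebra ℚ d 0} (hz : IsIntegral ℤ z) :
    ∃ p q : ℤ, z = ⟨p, q⟩ := by
  obtain ⟨s, hs⟩ := IsIntegrallyClosed.isIntegral_iff.mp (isIntegral_trace hz)
  obtain ⟨n, hn⟩ := IsIntegrallyClosed.isIntegral_iff.mp (isIntegral_norm hz)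
  rw [trace_def] at hs
  rw [norm_def] at hn
  obtain ⟨⟨p, hp⟩, ⟨q, hq⟩⟩ := Rat.exists_intCast_eq_of_two_mul_of_sq_sub_mul_sq hsf hd
    (x := z.re) (y := z.im) (by simpa using hs.symm)
    (by rw [← eq_intCast (algebraMap ℤ ℚ) n, hn]; ring)
  exact ⟨p, q, by ext <;> assumption⟩

end QuadraticAlgebra

namespace Ksqrt

variable (M : ℕ)

noncomputable def sqrt : 𝓞 (Ksqrt M) :=
  ⟨⟨√M, IntermediateField.mem_adjoin_simple_self ℚ _⟩,
    ⟨Polynomial.X ^ 2 - Polynomial.C (M : ℤ), Polynomial.monic_X_pow_sub_C _ two_ne_zero, by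
      apply Subtype.val_injective
      simp⟩⟩

@[simp]
theorem coe_sqrt : ((sqrt M : Ksqrt M) : ℝ) = √M := rfl

theorem sqrt_mul_self : sqrt M * sqrt M = M := by
  apply RingOfIntegers.ext
  apply Subtype.val_injective
  simp

noncomputable def zsqrtdHom : ℤ√(M : ℤ) →+* 𝓞 (Ksqrt M) :=
  Zsqrtd.lift ⟨sqrt M, by rw [sqrt_mul_self, Int.cast_natCast]⟩

theorem coe_zsqrtdHom (z : ℤ√(M : ℤ)) :
    ((zsqrtdHom M z : Ksqrt M) : ℝ) = z.re + z.im * √M := by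
  simp [zsqrtdHom]

variable {M}

theorem exists_isIntegral_quadraticAlgebra (hd : (M : ℤ) % 4 = 2 ∨ (M : ℤ) % 4 = 3)
    (x : 𝓞 (Ksqrt M)) :
    ∃ z : QuadraticAlgebra ℚ (M : ℤ) 0, IsIntegral ℤ z ∧ (x : ℝ) = z.re + z.im * √M := by
  -- this instance makes `QuadraticAlgebra ℚ M 0` a field, so `f` is injective with a `fieldRange`
  have : Fact (∀ r : ℚ, r ^ 2 ≠ ((M : ℤ) : ℚ) + 0 * r) := ⟨fun r hr =>
    Rat.isSquare_intCast_iff.mp ⟨r, by rw [← sq, hr, zero_mul, add_zero]⟩ |>.elim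
      (Int.ne_mul_self_of_emod_four hd)⟩
  let f : QuadraticAlgebra ℚ (M : ℤ) 0 →ₐ[ℚ] ℝ :=
    QuadraticAlgebra.lift ⟨√M, by simp [Real.mul_self_sqrt]⟩
  have hf : Ksqrt M ≤ f.fieldRange :=
    IntermediateField.adjoin_simple_le_iff.mpr ⟨QuadraticAlgebra.omega, by simp [f]⟩
  obtain ⟨z, hz⟩ := hf (x : Ksqrt M).2
  have hx : IsIntegral ℤ (x : ℝ) :=
    (RingOfIntegers.isIntegral_coe x).map (IsScalarTower.toAlgHom ℤ (Ksqrt M) ℝ)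
  refine ⟨z, ?_, ?_⟩
  · rw [← hz] at hx
    exact (isIntegral_algHom_iff (f.restrictScalars ℤ) f.toRingHom.injective).mp hx
  · rw [← hz]
    simp [f, Algebra.smul_def]

theorem zsqrtdHom_surjective (hsf : Squarefree (M : ℤ))
    (hd : (M : ℤ) % 4 = 2 ∨ (M : ℤ) % 4 = 3) :
    Function.Surjective (zsqrtdHom M) := by
  intro x
  obtain ⟨z, hz, hx⟩ := exists_isIntegral_quadraticAlgebra hd x
  obtain ⟨p, q, rfl⟩ := QuadraticAlgebra.exists_eq_mk_intCast_of_isIntegral hsf hd hz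
  refine ⟨⟨p, q⟩, ?_⟩
  apply RingOfIntegers.ext
  apply Subtype.val_injective
  simp [coe_zsqrtdHom, hx]

noncomputable def zsqrtdEquiv (hsf : Squarefree (M : ℤ))
    (hd : (M : ℤ) % 4 = 2 ∨ (M : ℤ) % 4 = 3) :
    ℤ√(M : ℤ) ≃+* 𝓞 (Ksqrt M) :=
  RingEquiv.ofBijective (zsqrtdHom M)
    ⟨Zsqrtd.lift_injective _ (Int.ne_mul_self_of_emod_four hd), zsqrtdHom_surjective hsf hd⟩

end Ksqrt

theorem stmt_11_general (M : ℕ) (hMeven : Even M) (hsf : Squarefree M) (hM8 : M / 2 % 8 = 5)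
    (Q2 : Ideal (𝓞 (Ksqrt M))) (hQ2 : Q2.IsPrime ∧ (2 : 𝓞 (Ksqrt M)) ∈ Q2) :
    ¬ Q2.IsPrincipal := by
  have hM16 : (M : ℤ) % 16 = 10 := by
    obtain ⟨k, rfl⟩ := hMeven
    omega
  let e := Ksqrt.zsqrtdEquiv (Int.squarefree_natCast.mpr hsf) (by omega)
  obtain ⟨hprime, h2⟩ := hQ2
  intro hpr
  refine Zsqrtd.not_isPrincipal_of_two_mem hM16 (P := Q2.map e.symm) ?_ (hpr.map_ringHom e.symm)
  simpa only [map_ofNat] using Ideal.mem_map_of_mem e.symm h2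

/-- For `M` even squarefree with `M/2 ≡ 5 (mod 8)`, the prime ideal `𝔮₂` of
`𝒪_K` above `2` (`K = ℚ(√M)`) is not principal. -/
theorem stmt_11 (M : ℕ) (hMeven : Even M) (hsf : Squarefree M) (hM8 : M / 2 % 8 = 5)
    [NumberField (Ksqrt M)]
    (Q2 : Ideal (𝓞 (Ksqrt M))) (hQ2 : Q2.IsPrime ∧ (2 : 𝓞 (Ksqrt M)) ∈ Q2) :
    ¬ Q2.IsPrincipal :=
  stmt_11_general M hMeven hsf hM8 Q2 hQ2
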